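/- Let G be an n-sum of connected multigraphs K and H along an n-element vertex set U (n ≥ 1), let x be a real number, and let D = (d_{AB}) be any real matrix indexed by Γ(U) satisfying L_n(x) · D · L_n(x) = L_n(x). Then T(G;x,1) = Σ_{A,B ∈ Γ(U)} d_{AB} · T(K/A;x,1) · T(H/B;x,1). -/

import Mathlib

attribute [local instance] Classical.propDecidable

/-- A multigraph: a finite vertex type, a finite edge index type, and an endpoint
map sending each edge to an unordered pair of vertices. -/
structure Multigraph where
  V : Type
  E : Type
  [finV : Fintype V]
  [finE : Fintype E]
  ends : E → Sym2 V

attribute [instance] Multigraph.finV Multigraph.finE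

namespace Multigraph

/-- Two vertices are related if some edge of `S` has them as its endpoints. -/
def rel (G : Multigraph) (S : Finset G.E) (v w : G.V) : Prop :=
  ∃ e ∈ S, G.ends e = s(v, w)

/-- `ω(S)`: the number of connected components of the spanning subgraph `(V(G), S)`. -/
noncomputable def omega (G : Multigraph) (S : Finset G.E) : ℕ :=
  Nat.card (Quotient (Relation.EqvGen.setoid (G.rel S)))

/-- `ω(G)`: the number of connected components of `G`. -/
noncomputable def omegaG (G : Multigraph) : ℕ :=
  G.omega Finset.univ

/-- The Negami polynomial `f(G;t,x,y)`. -/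
noncomputable def negami (G : Multigraph) (t x y : ℝ) : ℝ :=
  ∑ S : Finset G.E, t ^ G.omega S * x ^ S.card * y ^ (Fintype.card G.E - S.card)

/-- The Tutte polynomial `T(G;x,y)`. -/
noncomputable def tutte (G : Multigraph) (x y : ℝ) : ℝ :=
  ∑ S : Finset G.E,
    (x - 1) ^ (G.omega S - G.omegaG) *
      (y - 1) ^ (G.omega S + S.card - Fintype.card G.V)

end Multigraph

/-- The setoid on `V` extending a setoid `A` on the subset `U`: its nontrivial
classes are exactly the blocks of `A`. -/
def extendSetoid {V : Type} (U : Set V) (A : Setoid U) : Setoid V where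
  r v w := v = w ∨ ∃ (hv : v ∈ U) (hw : w ∈ U), A.r ⟨v, hv⟩ ⟨w, hw⟩
  iseqv := by
    constructor
    · exact fun v => Or.inl rfl
    · rintro v w (rfl | ⟨hv, hw, h⟩)
      · exact Or.inl rfl
      · exact Or.inr ⟨hw, hv, A.symm h⟩
    · rintro v w z (rfl | ⟨hv, hw, h⟩) (rfl | ⟨hw', hz, h'⟩)
      · exact Or.inl rfl
      · exact Or.inr ⟨hw', hz, h'⟩
      · exact Or.inr ⟨hv, hw, h⟩
      · exact Or.inr ⟨hv, hz, A.trans h h'⟩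

namespace Multigraph

/-- The contraction `K/A` of a multigraph `K` by a partition `A` of a subset `U` of
its vertices: all vertices in a common block of `A` are identified. -/
noncomputable def contract (K : Multigraph) {U : Set K.V} (A : Setoid U) : Multigraph where
  V := Quotient (extendSetoid U A)
  E := K.E
  finV := Fintype.ofFinite _
  finE := K.finE
  ends e := (K.ends e).map (Quotient.mk (extendSetoid U A))

/-- `P(S)`: the partition of `U` in which two vertices lie in the same block iff they
lie in the same connected component of the spanning subgraph `(V(K), S)`. -/
def part (K : Multigraph) (U : Set K.V) (S : Finset K.E) : Setoid U :=
  Setoid.comap Subtype.val (Relation.EqvGen.setoid (K.rel S))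

/-- The auxiliary Negami polynomial `f_A(K;t,x,y)`. -/
noncomputable def negamiAux (K : Multigraph) (U : Set K.V) (A : Setoid U) (t x y : ℝ) : ℝ :=
  ∑ S : Finset K.E,
    if K.part U S = A then
      t ^ (K.omega S - Nat.card (Quotient A)) * x ^ S.card *
        y ^ (Fintype.card K.E - S.card)
    else 0

/-- The auxiliary Tutte polynomial `T_A(K;x,y)`. -/
noncomputable def tutteAux (K : Multigraph) (U : Set K.V) (A : Setoid U) (x y : ℝ) : ℝ :=
  ∑ S : Finset K.E,
    if K.part U S = A then
      (x - 1) ^ (K.omega S - Nat.card (Quotient A)) *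
        (y - 1) ^ (K.omega S + S.card - Fintype.card K.V)
    else 0

end Multigraph

/-- The set of partitions of a finite type is finite. -/
instance setoidFinite {α : Type} [Finite α] : Finite (Setoid α) :=
  Finite.of_injective (fun s : Setoid α => s.r) fun a b h => by
    cases a; cases b; simp only at h; subst h; rfl

noncomputable instance setoidFintype {α : Type} [Finite α] : Fintype (Setoid α) :=
  Fintype.ofFinite _

/-- The number of blocks `|A|` of a partition (setoid) `A`. -/
noncomputable def nblocks {α : Type} (A : Setoid α) : ℕ :=
  Nat.card (Quotient A)

/-- The matrix `T_n(t)` indexed by partitions of `α`, with `(A,B)`-entry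
`t^{|A∧B|}` where `A∧B` is the finest common coarsening (the join `A ⊔ B`). -/
noncomputable def Tmat (α : Type) [Finite α] (t : ℝ) :
    Matrix (Setoid α) (Setoid α) ℝ :=
  Matrix.of fun A B => t ^ nblocks (A ⊔ B)

/-- The matrix `L_n(x)` indexed by partitions of `α`, with `(A,B)`-entry
`(x-1)^{|A∧B|-1}` if `|A∧B| + n = |A| + |B|` and `0` otherwise. -/
noncomputable def Lmat (α : Type) [Finite α] (n : ℕ) (x : ℝ) :
    Matrix (Setoid α) (Setoid α) ℝ :=
  Matrix.of fun A B =>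
    if nblocks (A ⊔ B) + n = nblocks A + nblocks B then
      (x - 1) ^ (nblocks (A ⊔ B) - 1)
    else 0

/-- The connectivity matrix `A_n` indexed by partitions of `α`, with `(A,B)`-entry
`1` if `|A∧B| = 1` and `0` otherwise. -/
noncomputable def Amat (α : Type) [Finite α] :
    Matrix (Setoid α) (Setoid α) ℝ :=
  Matrix.of fun A B => if nblocks (A ⊔ B) = 1 then (1 : ℝ) else 0

/-- `G` is an `n`-sum of `K` and `H` along `U`: `V(G) = V(K) ∪ V(H)`,
`V(K) ∩ V(H) = U`, and `E(G)` is the disjoint union of `E(K)` and `E(H)` with the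
inherited endpoint maps. -/
structure NSum (G K H : Multigraph) (U : Set G.V) where
  ιK : K.V → G.V
  ιH : H.V → G.V
  injK : Function.Injective ιK
  injH : Function.Injective ιH
  cover : Set.range ιK ∪ Set.range ιH = Set.univ
  inter : Set.range ιK ∩ Set.range ιH = U
  edgeEquiv : G.E ≃ K.E ⊕ H.E
  endsK : ∀ a, G.ends (edgeEquiv.symm (Sum.inl a)) = (K.ends a).map ιK
  endsH : ∀ a, G.ends (edgeEquiv.symm (Sum.inr a)) = (H.ends a).map ιH

namespace NSum

variable {G K H : Multigraph} {U : Set G.V}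

/-- The copy of a partition `A` of `U` on the corresponding subset of `V(K)`. -/
def pullK (σ : NSum G K H U) (A : Setoid U) : Setoid (σ.ιK ⁻¹' U : Set K.V) :=
  Setoid.comap (fun v => ⟨σ.ιK v.1, v.2⟩) A

/-- The copy of a partition `A` of `U` on the corresponding subset of `V(H)`. -/
def pullH (σ : NSum G K H U) (A : Setoid U) : Setoid (σ.ιH ⁻¹' U : Set H.V) :=
  Setoid.comap (fun v => ⟨σ.ιH v.1, v.2⟩) A

/-- The contraction `K/A` for a partition `A` of the common vertex set `U`. -/
noncomputable def contractK (σ : NSum G K H U) (A : Setoid U) : Multigraph :=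
  K.contract (σ.pullK A)

/-- The contraction `H/B` for a partition `B` of the common vertex set `U`. -/
noncomputable def contractH (σ : NSum G K H U) (B : Setoid U) : Multigraph :=
  H.contract (σ.pullH B)

end NSum

/-!
At `y = 1` only acyclic edge sets `S` contribute, each with weight `(x - 1) ^ (ω(S) - 1)`.
All component counts come from one gluing identity: for `f : β → α`, a partition `R` of `α`
and a partition `J` of `β`, `|R ⊔ J.map f| + |R.comap f| = |R| + |R.comap f ⊔ J|`. For a
contraction it gives `ω_{K/A}(S) - 1 = (ω_K(S) - |P|) + (|A ⊔ P| - 1)`, where `P` is the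
partition of `U` cut out by `S`; applied twice to the `n`-sum it gives
`ω_G(S) - 1 = (ω_K(S_K) - |P_K|) + (|P_K ⊔ P_H| - 1) + (ω_H(S_H) - |P_H|)`. With the rank
inequality `|V| ≤ ω(S) + |S|` and `|A| + |B| ≤ |A ⊔ B| + n`, the same identities decide
acyclicity. Hence `T(K/A;x,1) = (L t_K)_A` and `T(G;x,1) = t_K ⬝ L t_H` for the vectors
`t_K = (T_B(K;x,1))_B` and `t_H`, and as `L` is symmetric with `L D L = L`,
`(L t_K) ⬝ D (L t_H) = t_K ⬝ L D L t_H = t_K ⬝ L t_H`.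
-/

section Blocks

variable {α β : Type}

theorem nblocks_le_of_le [Finite α] {s t : Setoid α} (h : s ≤ t) : nblocks t ≤ nblocks s :=
  Nat.card_le_card_of_surjective (Setoid.map_of_le h) (Quotient.ind fun a => ⟨⟦a⟧, rfl⟩)

theorem nblocks_le_card [Finite α] (s : Setoid α) : nblocks s ≤ Nat.card α :=
  Nat.card_le_card_of_surjective (Quotient.mk s) Quotient.mk_surjective

theorem nblocks_pos [Finite α] [h : Nonempty α] (s : Setoid α) : 0 < nblocks s :=
  have : Nonempty (Quotient s) := h.map (Quotient.mk s)
  Nat.card_pos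

theorem nblocks_bot : nblocks (⊥ : Setoid α) = Nat.card α :=
  Nat.card_congr Setoid.quotientBotEquiv

theorem nblocks_top [h : Nonempty α] : nblocks (⊤ : Setoid α) = 1 :=
  have : Nonempty (Quotient (⊤ : Setoid α)) := h.map (Quotient.mk _)
  Nat.card_eq_one_iff_unique.mpr ⟨Quotient.subsingleton_iff.mpr rfl, this⟩

theorem nblocks_comap_eq_ncard_range (f : β → α) (s : Setoid α) :
    nblocks (s.comap f) = (Set.range (Quotient.mk s ∘ f)).ncard := by
  rw [nblocks, Nat.card_congr (Setoid.comapQuotientEquiv f s), Nat.card_coe_set_eq]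

theorem nblocks_comap_le [Finite α] (f : β → α) (s : Setoid α) :
    nblocks (s.comap f) ≤ nblocks s := by
  rw [nblocks_comap_eq_ncard_range, nblocks, ← Set.ncard_univ]
  exact Set.ncard_le_ncard (Set.subset_univ _)

theorem nblocks_comap_of_surjective {f : β → α} (hf : f.Surjective) (s : Setoid α) :
    nblocks (s.comap f) = nblocks s := by
  rw [nblocks_comap_eq_ncard_range, (Quotient.mk_surjective.comp hf).range_eq, Set.ncard_univ]
  rfl

theorem nblocks_comap_equiv (e : β ≃ α) (s : Setoid α) : nblocks (s.comap e) = nblocks s :=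
  nblocks_comap_of_surjective e.surjective s

theorem nblocks_eq_nblocks_comap_add [Finite α] (f : β → α) (s : Setoid α) :
    nblocks s = nblocks (s.comap f) + (Set.range (Quotient.mk s ∘ f))ᶜ.ncard := by
  rw [nblocks_comap_eq_ncard_range f, Set.ncard_add_ncard_compl, nblocks]

end Blocks

namespace Setoid

variable {α β γ δ : Type}

theorem rel_sup_left {r s : Setoid α} {x y : α} (h : r x y) : (r ⊔ s) x y :=
  (le_sup_left : r ≤ r ⊔ s) h

theorem rel_sup_right {r s : Setoid α} {x y : α} (h : s x y) : (r ⊔ s) x y :=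
  (le_sup_right : s ≤ r ⊔ s) h

theorem map_rel_of_rel {f : β → α} {r : Setoid β} {a b : β} (h : r a b) :
    r.map f (f a) (f b) :=
  le_comap_map h

theorem map_le_iff_le_comap {f : β → α} {r : Setoid β} {s : Setoid α} :
    r.map f ≤ s ↔ r ≤ s.comap f :=
  ⟨fun h => le_comap_map.trans fun _ _ hab => h hab,
    fun h => eqvGen_le fun _ _ ⟨_, _, hab, ha, hb⟩ => ha ▸ hb ▸ h hab⟩

theorem map_rel_iff_of_injective {f : β → α} (hf : f.Injective) (r : Setoid β) {x y : α} :
    r.map f x y ↔ x = y ∨ ∃ a b, r a b ∧ f a = x ∧ f b = y := by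
  rw [coe_map_of_ker_le r f (ker_eq_bot_iff.2 hf ▸ bot_le)]
  exact or_comm

def comapOrderIso (e : α ≃ β) : Setoid β ≃o Setoid α where
  toFun := comap e
  invFun := comap e.symm
  left_inv r := ext fun a b => by simp only [comap_rel, Equiv.apply_symm_apply]
  right_inv r := ext fun a b => by simp only [comap_rel, Equiv.symm_apply_apply]
  map_rel_iff' {r s} := by
    show r.comap e ≤ s.comap e ↔ r ≤ s
    refine ⟨fun h a b hab => ?_, fun h _ _ hab => h hab⟩
    have := h (show (r.comap e) (e.symm a) (e.symm b) by
      simpa only [comap_rel, Equiv.apply_symm_apply] using hab)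
    simpa only [comap_rel, Equiv.apply_symm_apply] using this

theorem comap_map_eq_map_comap {f : α → γ} {g : β → γ} {p : δ → α} {q : δ → β}
    (hf : f.Injective) (hg : g.Injective) (hp : p.Injective) (hfg : ∀ d, f (p d) = g (q d))
    (hpb : ∀ a b, f a = g b → ∃ d, p d = a ∧ q d = b) (r : Setoid β) :
    (r.map g).comap f = (r.comap q).map p := by
  refine ext fun a a' => ?_
  rw [comap_rel, map_rel_iff_of_injective hg, map_rel_iff_of_injective hp, hf.eq_iff]
  refine or_congr_right ⟨?_, ?_⟩
  · rintro ⟨b, b', hbb', hb, hb'⟩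
    obtain ⟨d, rfl, rfl⟩ := hpb a b hb.symm
    obtain ⟨d', rfl, rfl⟩ := hpb a' b' hb'.symm
    exact ⟨d, d', hbb', rfl, rfl⟩
  · rintro ⟨d, d', hdd', rfl, rfl⟩
    exact ⟨q d, q d', hdd', (hfg d).symm, (hfg d').symm⟩

theorem rel_of_sym2_map_eq {φ : α → β} {r : Setoid β} {z : Sym2 α}
    (hz : ∀ a b, z = s(a, b) → r (φ a) (φ b)) {x y : β} (h : z.map φ = s(x, y)) :
    r x y := by
  induction z using Sym2.ind with | _ a b => ?_
  rcases Sym2.eq_iff.mp h with ⟨rfl, rfl⟩ | ⟨rfl, rfl⟩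
  · exact hz a b rfl
  · exact r.symm (hz a b rfl)

section Gluing

variable (f : β → α) (R : Setoid α) (J : Setoid β)

theorem le_comap_sup_map : R.comap f ⊔ J ≤ (R ⊔ J.map f).comap f :=
  sup_le (fun _ _ h => rel_sup_left (s := J.map f) h)
    (le_comap_map.trans fun _ _ h => rel_sup_right (r := R) (s := J.map f) h)

theorem sup_map_rel_iff {x y : α} :
    (R ⊔ J.map f) x y ↔
      R x y ∨ ∃ u v, R x (f u) ∧ (R.comap f ⊔ J) u v ∧ R (f v) y := by
  set J' := R.comap f ⊔ J
  let T : Setoid α :=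
    { r := fun x y => R x y ∨ ∃ u v, R x (f u) ∧ J' u v ∧ R (f v) y
      iseqv := by
        refine ⟨fun x => .inl (R.refl x), ?_, ?_⟩
        · rintro x y (h | ⟨u, v, hu, huv, hv⟩)
          · exact .inl (R.symm h)
          · exact .inr ⟨v, u, R.symm hv, J'.symm huv, R.symm hu⟩
        · rintro x y z (h | ⟨u, v, hu, huv, hv⟩) (h' | ⟨u', v', hu', huv', hv'⟩)
          · exact .inl (R.trans h h')
          · exact .inr ⟨u', v', R.trans h hu', huv', hv'⟩
          · exact .inr ⟨u, v, hu, huv, R.trans hv h'⟩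
          · have hvu' : J' v u' := rel_sup_left (R.trans hv hu')
            exact .inr ⟨u, v', hu, J'.trans huv (J'.trans hvu' huv'), hv'⟩ }
  refine ⟨fun h => ?_, ?_⟩
  · refine (sup_le (fun _ _ => .inl) (map_le_iff_le_comap.mpr fun u v huv => ?_) : _ ≤ T) h
    exact .inr ⟨u, v, R.refl _, rel_sup_right huv, R.refl _⟩
  · rintro (h | ⟨u, v, hu, huv, hv⟩)
    · exact rel_sup_left h
    · exact (R ⊔ J.map f).trans (rel_sup_left hu)
        ((R ⊔ J.map f).trans (le_comap_sup_map f R J huv) (rel_sup_left hv))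

theorem comap_sup_map : (R ⊔ J.map f).comap f = R.comap f ⊔ J := by
  refine le_antisymm (fun u v h => ?_) (le_comap_sup_map f R J)
  obtain h | ⟨u', v', hu, huv, hv⟩ := (sup_map_rel_iff f R J).mp h
  · exact rel_sup_left h
  · exact (R.comap f ⊔ J).trans (rel_sup_left hu) ((R.comap f ⊔ J).trans huv (rel_sup_left hv))

theorem ncard_compl_range_sup_map :
    (Set.range (Quotient.mk (R ⊔ J.map f) ∘ f))ᶜ.ncard =
      (Set.range (Quotient.mk R ∘ f))ᶜ.ncard := by
  set T := R ⊔ J.map f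
  have hRT : R ≤ T := le_sup_left
  have mem_range (s : Setoid α) (x : α) :
      ⟦x⟧ ∈ Set.range (Quotient.mk s ∘ f) ↔ ∃ u, s (f u) x :=
    exists_congr fun _ => Quotient.eq
  have meets (x : α) : (∃ u, T (f u) x) ↔ ∃ u, R (f u) x := by
    refine ⟨fun ⟨u, h⟩ => ?_, fun ⟨u, h⟩ => ⟨u, hRT h⟩⟩
    obtain h | ⟨_, v, -, -, hv⟩ := (sup_map_rel_iff f R J).mp h
    exacts [⟨u, h⟩, ⟨v, hv⟩]
  have himage : map_of_le hRT '' (Set.range (Quotient.mk R ∘ f))ᶜ =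
      (Set.range (Quotient.mk T ∘ f))ᶜ := by
    refine Set.Subset.antisymm ?_ fun d hd => ?_
    · rintro _ ⟨c, hc, rfl⟩
      induction c using Quotient.ind with | _ x => ?_
      show (⟦x⟧ : Quotient T) ∈ _
      simpa only [Set.mem_compl_iff, mem_range, meets] using hc
    · induction d using Quotient.ind with | _ x => ?_
      refine ⟨⟦x⟧, ?_, rfl⟩
      simpa only [Set.mem_compl_iff, mem_range, meets] using hd
  have hinj : Set.InjOn (map_of_le hRT) (Set.range (Quotient.mk R ∘ f))ᶜ := by
    intro c hc d _ hcd
    induction c using Quotient.ind with | _ x => ?_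
    induction d using Quotient.ind with | _ y => ?_
    obtain h | ⟨u, -, hu, -, -⟩ := (sup_map_rel_iff f R J).mp (Quotient.eq.mp hcd)
    · exact Quotient.sound h
    · exact absurd ((mem_range R x).mpr ⟨u, R.symm hu⟩) hc
  rw [← himage, hinj.ncard_image]

theorem nblocks_sup_map_add [Finite α] :
    nblocks (R ⊔ J.map f) + nblocks (R.comap f) = nblocks R + nblocks (R.comap f ⊔ J) := by
  rw [nblocks_eq_nblocks_comap_add f (R ⊔ J.map f), nblocks_eq_nblocks_comap_add f R,
    comap_sup_map, ncard_compl_range_sup_map]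
  ring

end Gluing

theorem nblocks_map_add_card [Finite α] {f : β → α} (hf : f.Injective) (J : Setoid β) :
    nblocks (J.map f) + Nat.card β = Nat.card α + nblocks J := by
  have hbot : (⊥ : Setoid α).comap f = ⊥ := ext fun _ _ => hf.eq_iff
  have := nblocks_sup_map_add f ⊥ J
  rwa [bot_sup_eq, hbot, bot_sup_eq, nblocks_bot, nblocks_bot] at this

end Setoid

theorem Sym2.exists_eq_mk {α : Type} (z : Sym2 α) : ∃ a b, z = s(a, b) :=
  z.ind (f := fun z => ∃ a b, z = s(a, b)) fun a b => ⟨a, b, rfl⟩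

namespace Multigraph

variable (G : Multigraph)

def conn (S : Finset G.E) : Setoid G.V :=
  Relation.EqvGen.setoid (G.rel S)

theorem omega_eq_nblocks (S : Finset G.E) : G.omega S = nblocks (G.conn S) := rfl

variable {G}

theorem conn_of_mem {S : Finset G.E} {e : G.E} (he : e ∈ S) {x y : G.V}
    (h : G.ends e = s(x, y)) : G.conn S x y :=
  Relation.EqvGen.rel _ _ ⟨e, he, h⟩

theorem conn_le_of_forall {S : Finset G.E} {R : Setoid G.V}
    (h : ∀ e ∈ S, ∀ x y, G.ends e = s(x, y) → R x y) : G.conn S ≤ R :=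
  Setoid.eqvGen_le fun x y ⟨e, he, hxy⟩ => h e he x y hxy

theorem conn_mono {S T : Finset G.E} (h : S ⊆ T) : G.conn S ≤ G.conn T :=
  conn_le_of_forall fun _ he _ _ => conn_of_mem (h he)

theorem conn_le_comap_of_ends {K : Multigraph} (φ : K.V → G.V) (ψ : K.E → G.E)
    (hends : ∀ a, G.ends (ψ a) = (K.ends a).map φ) {P : Finset K.E} {S : Finset G.E}
    (hPS : ∀ a ∈ P, ψ a ∈ S) : K.conn P ≤ (G.conn S).comap φ :=
  conn_le_of_forall fun a ha x y hxy =>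
    conn_of_mem (hPS a ha) (by rw [hends, hxy, Sym2.map_mk])

theorem conn_insert {e : G.E} {a b : G.V} (hab : G.ends e = s(a, b)) (S : Finset G.E) :
    G.conn (insert e S) = G.conn S ⊔ (⊤ : Setoid (Fin 2)).map ![a, b] := by
  refine le_antisymm (conn_le_of_forall fun e' he' x y hxy => ?_)
    (sup_le (conn_mono (Finset.subset_insert e S)) (Setoid.map_le_iff_le_comap.mpr ?_))
  · rcases Finset.mem_insert.mp he' with rfl | he'
    · rw [hab] at hxy
      rcases Sym2.eq_iff.mp hxy with ⟨rfl, rfl⟩ | ⟨rfl, rfl⟩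
      · exact Setoid.rel_sup_right (Setoid.map_rel_of_rel (a := 0) (b := 1) trivial)
      · exact Setoid.rel_sup_right (Setoid.map_rel_of_rel (a := 1) (b := 0) trivial)
    · exact Setoid.rel_sup_left (conn_of_mem he' hxy)
  · have hb : G.conn (insert e S) a b := conn_of_mem (Finset.mem_insert_self e S) hab
    have to_a : ∀ i, G.conn (insert e S) (![a, b] i) a := by
      intro i
      fin_cases i
      exacts [Setoid.refl' _ a, Setoid.symm' _ hb]
    exact fun i j _ => show G.conn (insert e S) (![a, b] i) (![a, b] j) from
      Setoid.trans' _ (to_a i) (Setoid.symm' _ (to_a j))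

theorem omega_le_omega_insert_add_one (e : G.E) (S : Finset G.E) :
    G.omega S ≤ G.omega (insert e S) + 1 := by
  obtain ⟨a, b, hab⟩ := (G.ends e).exists_eq_mk
  have glue := Setoid.nblocks_sup_map_add ![a, b] (G.conn S) ⊤
  rw [sup_top_eq, nblocks_top, ← conn_insert hab] at glue
  have := nblocks_le_card ((G.conn S).comap ![a, b])
  rw [Nat.card_fin] at this
  rw [omega_eq_nblocks, omega_eq_nblocks]
  omega

variable (G)

theorem card_V_le_omega_add_card (S : Finset G.E) : Fintype.card G.V ≤ G.omega S + S.card := by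
  induction S using Finset.induction_on with
  | empty =>
    have : G.conn ∅ = ⊥ := le_bot_iff.mp (conn_le_of_forall fun _ he => absurd he (by simp))
    rw [omega_eq_nblocks, this, nblocks_bot, Nat.card_eq_fintype_card]
    omega
  | insert e S he ih =>
    rw [Finset.card_insert_of_notMem he]
    have := G.omega_le_omega_insert_add_one e S
    omega

/-- Equivalently, `S` contains no cycle: the equality case of `card_V_le_omega_add_card`. -/
def IsAcyclic (S : Finset G.E) : Prop :=
  G.omega S + S.card = Fintype.card G.V

/-- The weight of `S` in `T(G;x,1)` and in `T_A(G;x,1)`, where `k` is `ω(G)`, resp. `|A|`. -/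
noncomputable def acyclicWeight (x : ℝ) (k : ℕ) (S : Finset G.E) : ℝ :=
  if G.IsAcyclic S then (x - 1) ^ (G.omega S - k) else 0

theorem pow_eq_acyclicWeight (x : ℝ) (k : ℕ) (S : Finset G.E) :
    (x - 1) ^ (G.omega S - k) * (1 - 1 : ℝ) ^ (G.omega S + S.card - Fintype.card G.V) =
      G.acyclicWeight x k S := by
  have := G.card_V_le_omega_add_card S
  unfold acyclicWeight IsAcyclic
  split_ifs with h
  · rw [h, Nat.sub_self, pow_zero, mul_one]
  · rw [sub_self, zero_pow (by omega), mul_zero]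

theorem tutte_one_eq_sum (x : ℝ) : G.tutte x 1 = ∑ S, G.acyclicWeight x G.omegaG S :=
  Finset.sum_congr rfl fun S _ => G.pow_eq_acyclicWeight x _ S

theorem tutteAux_one_eq_sum (W : Set G.V) (A : Setoid W) (x : ℝ) :
    G.tutteAux W A x 1 = ∑ S, if G.part W S = A then G.acyclicWeight x (nblocks A) S else 0 :=
  Finset.sum_congr rfl fun S _ => by
    split_ifs
    exacts [G.pow_eq_acyclicWeight x _ S, rfl]

theorem sum_mul_tutteAux_one (W : Set G.V) (c : Setoid W → ℝ) (x : ℝ) :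
    ∑ A, c A * G.tutteAux W A x 1 =
      ∑ S, c (G.part W S) * G.acyclicWeight x (nblocks (G.part W S)) S := by
  simp_rw [tutteAux_one_eq_sum, Finset.mul_sum]
  rw [Finset.sum_comm]
  refine Finset.sum_congr rfl fun S _ => ?_
  simp only [mul_ite, mul_zero]
  exact Finset.sum_ite_eq _ _ _ |>.trans (if_pos (Finset.mem_univ _))

end Multigraph

section Submodularity

variable {α : Type} [Finite α]

noncomputable def Setoid.incidenceGraph (A B : Setoid α) : Multigraph where
  V := Quotient A ⊕ Quotient B
  E := α
  finV := Fintype.ofFinite _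
  finE := Fintype.ofFinite _
  ends a := s(.inl ⟦a⟧, .inr ⟦a⟧)

theorem Setoid.omega_incidenceGraph_le (A B : Setoid α) :
    (incidenceGraph A B).omega Finset.univ ≤ nblocks (A ⊔ B) := by
  set C := (incidenceGraph A B).conn Finset.univ
  have edge (a : α) : C (.inl ⟦a⟧) (.inr ⟦a⟧) :=
    Multigraph.conn_of_mem (G := incidenceGraph A B) (e := a) (Finset.mem_univ _) rfl
  have hker : A ⊔ B ≤ ker fun a => (⟦.inl ⟦a⟧⟧ : Quotient C) := by
    refine sup_le (fun a b h => ?_) (fun a b h => Quotient.sound ?_)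
    · simp only [ker_def, Quotient.sound h]
    · have hab : (⟦a⟧ : Quotient B) = ⟦b⟧ := Quotient.sound h
      exact C.trans (edge a) (hab ▸ C.symm (edge b))
  refine Nat.card_le_card_of_surjective (Quotient.lift _ fun a b h => hker h) ?_
  rintro ⟨q | q⟩ <;> induction q using Quotient.ind with | _ a => ?_
  exacts [⟨⟦a⟧, rfl⟩, ⟨⟦a⟧, Quotient.sound (edge a)⟩]

/-- The rank inequality for `Setoid.incidenceGraph A B`, whose components are the blocks of
`A ⊔ B`. -/
theorem nblocks_add_nblocks_le (A B : Setoid α) :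
    nblocks A + nblocks B ≤ nblocks (A ⊔ B) + Nat.card α := by
  have hrank := (A.incidenceGraph B).card_V_le_omega_add_card Finset.univ
  have hV : Fintype.card (A.incidenceGraph B).V = nblocks A + nblocks B := by
    rw [← Nat.card_eq_fintype_card]
    exact Nat.card_sum
  have hE : (Finset.univ : Finset (A.incidenceGraph B).E).card = Nat.card α := by
    rw [Finset.card_univ, ← Nat.card_eq_fintype_card]
    rfl
  have := A.omega_incidenceGraph_le B
  omega

end Submodularity

namespace Multigraph

variable {K : Multigraph} {W : Set K.V} (A : Setoid W)

theorem extendSetoid_eq_map : extendSetoid W A = A.map Subtype.val := by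
  refine le_antisymm ?_ (Setoid.map_le_iff_le_comap.mpr fun u v h => Or.inr ⟨u.2, v.2, h⟩)
  rintro x y (rfl | ⟨hx, hy, h⟩)
  · exact Setoid.refl' _ x
  · exact Relation.EqvGen.rel _ _ ⟨⟨x, hx⟩, ⟨y, hy⟩, h, rfl, rfl⟩

theorem comap_conn_contract (S : Finset K.E) :
    ((K.contract A).conn S).comap (Quotient.mk _) = K.conn S ⊔ extendSetoid W A := by
  set T := K.conn S ⊔ extendSetoid W A
  refine le_antisymm (fun x y h => ?_) (sup_le ?_ fun x y h => ?_)
  · let ψ : (K.contract A).V → Quotient T :=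
      Quotient.lift (Quotient.mk T) fun _ _ h => Quotient.sound (Setoid.rel_sup_right h)
    have hψ : (K.contract A).conn S ≤ Setoid.ker ψ := conn_le_of_forall fun e he _ _ hpq =>
      Setoid.rel_of_sym2_map_eq
        (fun _ _ hab => Quotient.sound (Setoid.rel_sup_left (conn_of_mem he hab))) hpq
    exact Quotient.exact (hψ h)
  · exact conn_le_comap_of_ends (G := K.contract A) (Quotient.mk _) id (fun _ => rfl) fun _ => id
  · show (K.contract A).conn S ⟦x⟧ ⟦y⟧
    rw [Quotient.sound h]
    exact Setoid.refl' _ _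

theorem omega_contract (S : Finset K.E) :
    (K.contract A).omega S = nblocks (K.conn S ⊔ extendSetoid W A) :=
  (nblocks_comap_of_surjective Quotient.mk_surjective _).symm.trans
    (congrArg nblocks (comap_conn_contract A S))

theorem omega_contract_add (S : Finset K.E) :
    (K.contract A).omega S + nblocks (K.part W S) = K.omega S + nblocks (K.part W S ⊔ A) := by
  rw [omega_contract, extendSetoid_eq_map]
  exact Setoid.nblocks_sup_map_add Subtype.val (K.conn S) A

theorem card_V_contract_add :
    Fintype.card (K.contract A).V + Nat.card W = Fintype.card K.V + nblocks A := by
  rw [← Nat.card_eq_fintype_card, ← Nat.card_eq_fintype_card]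
  have := Setoid.nblocks_map_add_card Subtype.val_injective A
  rwa [← extendSetoid_eq_map] at this

theorem omegaG_contract (hK : K.omegaG = 1) : (K.contract A).omegaG = 1 := by
  have hle : (K.contract A).omegaG ≤ K.omegaG :=
    (omega_contract A Finset.univ).trans_le (nblocks_le_of_le le_sup_left)
  have : Nonempty (Quotient (K.conn Finset.univ)) :=
    (Nat.card_pos_iff.mp (show 0 < K.omegaG by omega)).1
  have : Nonempty (K.contract A).V := this.map fun q => ⟦q.out⟧
  have : 0 < (K.contract A).omegaG := nblocks_pos _
  omega

theorem isAcyclic_contract_iff (S : Finset K.E) :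
    (K.contract A).IsAcyclic S ↔ K.IsAcyclic S ∧
      nblocks (A ⊔ K.part W S) + Nat.card W = nblocks A + nblocks (K.part W S) := by
  have := omega_contract_add A S
  have := card_V_contract_add A
  have := K.card_V_le_omega_add_card S
  have := nblocks_add_nblocks_le A (K.part W S)
  have : nblocks (K.part W S ⊔ A) = nblocks (A ⊔ K.part W S) := by rw [sup_comm]
  have : @Finset.card (K.contract A).E S = S.card := rfl
  unfold IsAcyclic
  omega

theorem acyclicWeight_contract [Nonempty W] (x : ℝ) (S : Finset K.E) :
    (K.contract A).acyclicWeight x 1 S =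
      Lmat W (Nat.card W) x A (K.part W S) * K.acyclicWeight x (nblocks (K.part W S)) S := by
  simp only [acyclicWeight, Lmat, Matrix.of_apply]
  by_cases hS : K.IsAcyclic S ∧
      nblocks (A ⊔ K.part W S) + Nat.card W = nblocks A + nblocks (K.part W S)
  · have := omega_contract_add A S
    have : nblocks (K.part W S) ≤ K.omega S := nblocks_comap_le _ _
    have := nblocks_pos (A ⊔ K.part W S)
    have : nblocks (K.part W S ⊔ A) = nblocks (A ⊔ K.part W S) := by rw [sup_comm]
    rw [if_pos ((isAcyclic_contract_iff A S).mpr hS), if_pos hS.1, if_pos hS.2, ← pow_add]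
    congr 1
    omega
  · rw [if_neg (mt (isAcyclic_contract_iff A S).mp hS)]
    split_ifs <;> simp_all

theorem tutte_contract_one [Nonempty W] (hK : K.omegaG = 1) (x : ℝ) :
    (K.contract A).tutte x 1 = ∑ B, Lmat W (Nat.card W) x A B * K.tutteAux W B x 1 := by
  rw [tutte_one_eq_sum, sum_mul_tutteAux_one, omegaG_contract A hK]
  exact Finset.sum_congr rfl fun S _ => acyclicWeight_contract A x S

end Multigraph

section Matrices

open Matrix

theorem Lmat_transpose (α : Type) [Finite α] (n : ℕ) (x : ℝ) :
    (Lmat α n x)ᵀ = Lmat α n x := by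
  ext A B
  simp only [transpose_apply, Lmat, of_apply]
  rw [sup_comm, add_comm (nblocks B)]

theorem Lmat_comap {α β : Type} [Finite α] [Finite β] (e : α ≃ β) (n : ℕ) (x : ℝ)
    (A B : Setoid β) : Lmat α n x (A.comap e) (B.comap e) = Lmat β n x A B := by
  have hsup : A.comap e ⊔ B.comap e = (A ⊔ B).comap e :=
    ((Setoid.comapOrderIso e).map_sup A B).symm
  simp only [Lmat, of_apply, hsup, nblocks_comap_equiv]

theorem dotProduct_mulVec_mulVec_of_mul_mul {ι R : Type} [Fintype ι] [CommSemiring R]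
    {L D : Matrix ι ι R} (hL : Lᵀ = L) (hD : L * D * L = L) (a b : ι → R) :
    (L *ᵥ a) ⬝ᵥ (D *ᵥ (L *ᵥ b)) = a ⬝ᵥ (L *ᵥ b) := by
  rw [← vecMul_transpose L a, hL, ← dotProduct_mulVec, mulVec_mulVec, mulVec_mulVec, hD]

end Matrices

namespace NSum

open Multigraph Matrix

variable {G K H : Multigraph} {U : Set G.V} (σ : NSum G K H U)

def symm : NSum G H K U where
  ιK := σ.ιH
  ιH := σ.ιK
  injK := σ.injH
  injH := σ.injK
  cover := by rw [Set.union_comm]; exact σ.cover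
  inter := by rw [Set.inter_comm]; exact σ.inter
  edgeEquiv := σ.edgeEquiv.trans (Equiv.sumComm _ _)
  endsK := σ.endsH
  endsH := σ.endsK

theorem mem_ranges_of_mem {x : G.V} (hx : x ∈ U) : x ∈ Set.range σ.ιK ∩ Set.range σ.ιH :=
  σ.inter.symm.subset hx

noncomputable def eK : ↥(σ.ιK ⁻¹' U) ≃ U :=
  Equiv.ofBijective (fun v => ⟨σ.ιK v, v.2⟩)
    ⟨fun _ _ h => Subtype.ext (σ.injK (congrArg Subtype.val h)), fun u => by
      obtain ⟨w, hw⟩ := (σ.mem_ranges_of_mem u.2).1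
      exact ⟨⟨w, by simp [hw]⟩, Subtype.ext hw⟩⟩

noncomputable def uK (u : U) : K.V :=
  σ.eK.symm u

theorem ιK_uK (u : U) : σ.ιK (σ.uK u) = u :=
  congrArg Subtype.val (σ.eK.apply_symm_apply u)

theorem uK_injective : σ.uK.Injective :=
  fun _ _ h => σ.eK.symm.injective (Subtype.ext h)

theorem exists_uK_eq_of_ιK_eq_ιH {a : K.V} {b : H.V} (h : σ.ιK a = σ.ιH b) :
    ∃ u, σ.uK u = a ∧ σ.symm.uK u = b := by
  have hU : σ.ιK a ∈ U := σ.inter.subset ⟨⟨a, rfl⟩, ⟨b, h.symm⟩⟩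
  refine ⟨⟨_, hU⟩, σ.injK (σ.ιK_uK _), σ.injH ?_⟩
  exact (σ.symm.ιK_uK ⟨_, hU⟩).trans h

theorem card_V_add (σ : NSum G K H U) :
    Fintype.card G.V + Nat.card U = Fintype.card K.V + Fintype.card H.V := by
  have h := Set.ncard_union_add_ncard_inter (Set.range σ.ιK) (Set.range σ.ιH)
  rw [σ.cover, σ.inter, Set.ncard_univ, ← Set.image_univ, ← Set.image_univ,
    Set.ncard_image_of_injective _ σ.injK, Set.ncard_image_of_injective _ σ.injH,
    Set.ncard_univ, Set.ncard_univ, ← Nat.card_coe_set_eq] at h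
  simpa only [Nat.card_eq_fintype_card] using h

noncomputable def edgeSplit : Finset K.E × Finset H.E ≃ Finset G.E :=
  Finset.sumEquiv.toEquiv.symm.trans (Equiv.finsetCongr σ.edgeEquiv.symm)

theorem mem_edgeSplit {P : Finset K.E} {Q : Finset H.E} {e : G.E} :
    e ∈ σ.edgeSplit (P, Q) ↔ σ.edgeEquiv e ∈ P.disjSum Q := by
  simp [edgeSplit, Finset.sumEquiv]

theorem card_edgeSplit (P : Finset K.E) (Q : Finset H.E) :
    (σ.edgeSplit (P, Q)).card = P.card + Q.card := by
  simp [edgeSplit, Finset.sumEquiv]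

theorem edgeSplit_univ : σ.edgeSplit (Finset.univ, Finset.univ) = Finset.univ := by
  ext e
  simp [mem_edgeSplit]

theorem conn_edgeSplit (P : Finset K.E) (Q : Finset H.E) :
    G.conn (σ.edgeSplit (P, Q)) = (K.conn P).map σ.ιK ⊔ (H.conn Q).map σ.ιH := by
  refine le_antisymm (conn_le_of_forall fun e he x y hxy => ?_) (sup_le ?_ ?_)
  · rw [mem_edgeSplit] at he
    cases h : σ.edgeEquiv e with
    | inl a =>
      rw [← σ.edgeEquiv.symm_apply_eq.mpr h.symm, σ.endsK] at hxy
      rw [h, Finset.inl_mem_disjSum] at he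
      exact Setoid.rel_of_sym2_map_eq (φ := σ.ιK) (fun _ _ hw =>
        Setoid.rel_sup_left (Setoid.map_rel_of_rel (conn_of_mem he hw))) hxy
    | inr b =>
      rw [← σ.edgeEquiv.symm_apply_eq.mpr h.symm, σ.endsH] at hxy
      rw [h, Finset.inr_mem_disjSum] at he
      exact Setoid.rel_of_sym2_map_eq (φ := σ.ιH) (fun _ _ hw =>
        Setoid.rel_sup_right (Setoid.map_rel_of_rel (conn_of_mem he hw))) hxy
  · exact Setoid.map_le_iff_le_comap.mpr (conn_le_comap_of_ends σ.ιK _ σ.endsK fun a ha => by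
      simpa [mem_edgeSplit] using ha)
  · exact Setoid.map_le_iff_le_comap.mpr (conn_le_comap_of_ends σ.ιH _ σ.endsH fun b hb => by
      simpa [mem_edgeSplit] using hb)

noncomputable def partK (P : Finset K.E) : Setoid U :=
  (K.part (σ.ιK ⁻¹' U) P).comap σ.eK.symm

theorem nblocks_partK (P : Finset K.E) :
    nblocks (σ.partK P) = nblocks (K.part (σ.ιK ⁻¹' U) P) :=
  nblocks_comap_equiv _ _

theorem nblocks_partK_le (P : Finset K.E) : nblocks (σ.partK P) ≤ K.omega P :=
  (σ.nblocks_partK P).trans_le (nblocks_comap_le Subtype.val (K.conn P))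

theorem omega_edgeSplit_add (P : Finset K.E) (Q : Finset H.E) :
    G.omega (σ.edgeSplit (P, Q)) + nblocks (σ.partK P) + nblocks (σ.symm.partK Q) =
      K.omega P + H.omega Q + nblocks (σ.partK P ⊔ σ.symm.partK Q) := by
  -- Glue `K` onto the image of `H` in `G`: the trace of that image on `K` is `σ.symm.partK Q`
  -- carried by `uK`, and gluing this trace into `K` is a second instance of the same identity.
  have pullback : ((H.conn Q).map σ.ιH).comap σ.ιK = (σ.symm.partK Q).map σ.uK :=
    Setoid.comap_map_eq_map_comap σ.injK σ.injH σ.uK_injective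
      (fun u => (σ.ιK_uK u).trans (σ.symm.ιK_uK u).symm)
      (fun _ _ h => σ.exists_uK_eq_of_ιK_eq_ιH h) (H.conn Q)
  have glueG := Setoid.nblocks_sup_map_add σ.ιK ((H.conn Q).map σ.ιH) (K.conn P)
  rw [pullback, sup_comm, ← conn_edgeSplit, sup_comm] at glueG
  have glueK : nblocks (K.conn P ⊔ (σ.symm.partK Q).map σ.uK) + nblocks (σ.partK P) =
      K.omega P + nblocks (σ.partK P ⊔ σ.symm.partK Q) :=
    Setoid.nblocks_sup_map_add σ.uK (K.conn P) (σ.symm.partK Q)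
  have hH : nblocks ((H.conn Q).map σ.ιH) + Fintype.card H.V = Fintype.card G.V + H.omega Q := by
    simpa only [Nat.card_eq_fintype_card, omega_eq_nblocks] using
      Setoid.nblocks_map_add_card σ.injH (H.conn Q)
  have hK : nblocks ((σ.symm.partK Q).map σ.uK) + Nat.card U =
      Fintype.card K.V + nblocks (σ.symm.partK Q) := by
    simpa only [Nat.card_eq_fintype_card] using
      Setoid.nblocks_map_add_card σ.uK_injective (σ.symm.partK Q)
  have hV := σ.card_V_add
  rw [omega_eq_nblocks]
  omega

theorem isAcyclic_edgeSplit_iff (P : Finset K.E) (Q : Finset H.E) :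
    G.IsAcyclic (σ.edgeSplit (P, Q)) ↔ K.IsAcyclic P ∧ H.IsAcyclic Q ∧
      nblocks (σ.partK P ⊔ σ.symm.partK Q) + Nat.card U =
        nblocks (σ.partK P) + nblocks (σ.symm.partK Q) := by
  have := σ.omega_edgeSplit_add P Q
  have := σ.card_edgeSplit P Q
  have := σ.card_V_add
  have := K.card_V_le_omega_add_card P
  have := H.card_V_le_omega_add_card Q
  have := nblocks_add_nblocks_le (σ.partK P) (σ.symm.partK Q)
  have := σ.nblocks_partK_le P
  have := σ.symm.nblocks_partK_le Q
  unfold IsAcyclic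
  omega

theorem omegaG_eq_one (σ : NSum G K H U) [Nonempty U] (hK : K.omegaG = 1)
    (hH : H.omegaG = 1) : G.omegaG = 1 := by
  have := σ.omega_edgeSplit_add Finset.univ Finset.univ
  rw [edgeSplit_univ] at this
  have := σ.nblocks_partK_le Finset.univ
  have := σ.symm.nblocks_partK_le Finset.univ
  have := nblocks_pos (σ.partK Finset.univ ⊔ σ.symm.partK Finset.univ)
  have := nblocks_le_of_le (le_sup_left : σ.partK Finset.univ ≤ _ ⊔ σ.symm.partK Finset.univ)
  have := nblocks_le_of_le (le_sup_right : σ.symm.partK Finset.univ ≤ σ.partK Finset.univ ⊔ _)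
  unfold omegaG at *
  omega

noncomputable def tutteAuxK (x : ℝ) (A : Setoid U) : ℝ :=
  K.tutteAux (σ.ιK ⁻¹' U) (σ.pullK A) x 1

theorem sum_mul_tutteAuxK (c : Setoid U → ℝ) (x : ℝ) :
    ∑ A, c A * σ.tutteAuxK x A =
      ∑ P, c (σ.partK P) * K.acyclicWeight x (nblocks (σ.partK P)) P := by
  let e := Setoid.comapOrderIso σ.eK
  calc ∑ A, c A * σ.tutteAuxK x A = ∑ A, c (e.symm A) * K.tutteAux (σ.ιK ⁻¹' U) A x 1 :=
        Fintype.sum_equiv e.toEquiv _ _ fun A => by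
          rw [RelIso.coe_fn_toEquiv, e.symm_apply_apply]
          rfl
    _ = _ := by
      rw [sum_mul_tutteAux_one]
      simp only [σ.nblocks_partK]
      rfl

theorem acyclicWeight_edgeSplit [Nonempty U] (x : ℝ) (P : Finset K.E) (Q : Finset H.E) :
    G.acyclicWeight x 1 (σ.edgeSplit (P, Q)) =
      K.acyclicWeight x (nblocks (σ.partK P)) P *
        Lmat U (Nat.card U) x (σ.partK P) (σ.symm.partK Q) *
        H.acyclicWeight x (nblocks (σ.symm.partK Q)) Q := by
  simp only [acyclicWeight, Lmat, Matrix.of_apply]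
  by_cases hS : K.IsAcyclic P ∧ H.IsAcyclic Q ∧
      nblocks (σ.partK P ⊔ σ.symm.partK Q) + Nat.card U =
        nblocks (σ.partK P) + nblocks (σ.symm.partK Q)
  · have := σ.omega_edgeSplit_add P Q
    have := σ.nblocks_partK_le P
    have := σ.symm.nblocks_partK_le Q
    have := nblocks_pos (σ.partK P ⊔ σ.symm.partK Q)
    rw [if_pos ((σ.isAcyclic_edgeSplit_iff P Q).mpr hS), if_pos hS.1, if_pos hS.2.1,
      if_pos hS.2.2, ← pow_add, ← pow_add]
    congr 1
    omega
  · rw [if_neg (mt (σ.isAcyclic_edgeSplit_iff P Q).mp hS)]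
    split_ifs <;> simp_all

theorem tutte_one_eq_dotProduct [Nonempty U] (hK : K.omegaG = 1) (hH : H.omegaG = 1) (x : ℝ) :
    G.tutte x 1 = σ.tutteAuxK x ⬝ᵥ (Lmat U (Nat.card U) x *ᵥ σ.symm.tutteAuxK x) := by
  calc G.tutte x 1 = ∑ PQ : Finset K.E × Finset H.E, G.acyclicWeight x 1 (σ.edgeSplit PQ) := by
        rw [tutte_one_eq_sum, σ.omegaG_eq_one hK hH]
        exact (σ.edgeSplit.sum_comp _).symm
    _ = ∑ P, K.acyclicWeight x (nblocks (σ.partK P)) P *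
          ∑ Q, Lmat U (Nat.card U) x (σ.partK P) (σ.symm.partK Q) *
            H.acyclicWeight x (nblocks (σ.symm.partK Q)) Q := by
        simp only [Fintype.sum_prod_type, σ.acyclicWeight_edgeSplit, Finset.mul_sum, mul_assoc]
    _ = ∑ P, (∑ B, Lmat U (Nat.card U) x (σ.partK P) B * σ.symm.tutteAuxK x B) *
          K.acyclicWeight x (nblocks (σ.partK P)) P := by
        refine Finset.sum_congr rfl fun P _ => ?_
        rw [σ.symm.sum_mul_tutteAuxK, mul_comm]
    _ = ∑ A, (∑ B, Lmat U (Nat.card U) x A B * σ.symm.tutteAuxK x B) * σ.tutteAuxK x A :=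
        (σ.sum_mul_tutteAuxK
          (fun A => ∑ B, Lmat U (Nat.card U) x A B * σ.symm.tutteAuxK x B) x).symm
    _ = σ.tutteAuxK x ⬝ᵥ (Lmat U (Nat.card U) x *ᵥ σ.symm.tutteAuxK x) := by
        simp only [dotProduct, mulVec, mul_comm]

theorem tutte_contractK_one [Nonempty U] (hK : K.omegaG = 1) (x : ℝ) (A : Setoid U) :
    (σ.contractK A).tutte x 1 = (Lmat U (Nat.card U) x *ᵥ σ.tutteAuxK x) A := by
  have : Nonempty (σ.ιK ⁻¹' U) := ⟨σ.eK.symm (Classical.arbitrary U)⟩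
  rw [contractK, tutte_contract_one _ hK, Nat.card_congr σ.eK]
  refine (Fintype.sum_equiv (Setoid.comapOrderIso σ.eK).toEquiv _ _ fun B => ?_).symm
  exact congrArg (· * σ.tutteAuxK x B) (Lmat_comap σ.eK _ x A B).symm

end NSum

/-- the splitting formula for `T(G;x,1)` of an `n`-sum of connected
multigraphs, for any generalized inverse `D` of `L_n(x)`. -/
theorem tutte_splitting_formula_y_eq_one
    (G K H : Multigraph) (U : Set G.V) (n : ℕ) (hn : 1 ≤ n)
    (sg : NSum G K H U) (hU : Nat.card ↥U = n)
    (hK : K.omegaG = 1) (hH : H.omegaG = 1) (x : ℝ)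
    (D : Matrix (Setoid ↥U) (Setoid ↥U) ℝ)
    (hD : Lmat ↥U n x * D * Lmat ↥U n x = Lmat ↥U n x) :
    G.tutte x 1 =
      ∑ A : Setoid ↥U, ∑ B : Setoid ↥U,
        D A B * (sg.contractK A).tutte x 1 * (sg.contractH B).tutte x 1 := by
  subst hU
  have : Nonempty U := (Nat.card_pos_iff.mp hn).1
  have hK' : (Lmat U (Nat.card U) x).mulVec (sg.tutteAuxK x) =
      fun A => (sg.contractK A).tutte x 1 :=
    funext fun A => (sg.tutte_contractK_one hK x A).symm
  have hH' : (Lmat U (Nat.card U) x).mulVec (sg.symm.tutteAuxK x) =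
      fun B => (sg.contractH B).tutte x 1 :=
    funext fun B => (sg.symm.tutte_contractK_one hH x B).symm
  rw [sg.tutte_one_eq_dotProduct hK hH,
    ← dotProduct_mulVec_mulVec_of_mul_mul (Lmat_transpose _ _ x) hD, hK', hH']
  simp only [dotProduct, Matrix.mulVec, Finset.mul_sum]
  exact Finset.sum_congr rfl fun A _ => Finset.sum_congr rfl fun B _ => by ring
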